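/- For every integer k ≥ 2 and every root β of Ψ_k(x) = x^k − 2x^{k-1} − ... − x − 1 other than the dominant root α, we have |g_k(β)| < 1, where g_k(z) = (z−1)/((k+1)z² − 3kz + k − 1). -/

import Mathlib

/-!
Multiplying `Ψ_k` by `x - 1` turns every root into a solution of
`x ^ (k - 1) * (x ^ 2 - 3 * x + 1) = -1`. For such a solution `β ≠ α` we get `|β| < 1`:
on `1 ≤ |β| < 2` the equation forces `|β ^ 2 - 3 * β + 1| ≤ 1`, while
`|β ^ 2 - 3 * β + 1| ≥ ||β| ^ 2 - 3 * |β| + 1| ≥ 1` there, with equality only at `β = 1`;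
for `|β| ≥ 2`, subtracting the equations for `β` and `α` and dividing by `β - α` gives
`(β + α - 3) * (α * β) ^ (k - 1) = ∑ β ^ i * α ^ (k - 2 - i)`, whose right-hand side is too
small because `2 < α < 3`. Finally, the denominator of `g_k` is
`k * (β ^ 2 - 3 * β + 1) + (β ^ 2 - 1)`, and inside the unit disc
`|β| * |β ^ 2 - 3 * β + 1| ≥ 1`, which makes its first term dominate `|β - 1| + |β ^ 2 - 1|`.
-/

open Finset Complex

namespace KPell

section Algebra

variable {R : Type*} [CommRing R]

def psi (k : ℕ) (x : R) : R := x ^ k - 2 * x ^ (k - 1) - ∑ i ∈ range (k - 1), x ^ i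

theorem psi_mul_sub_one {k : ℕ} (hk : 1 ≤ k) (x : R) :
    psi k x * (x - 1) = x ^ (k - 1) * (x ^ 2 - 3 * x + 1) + 1 := by
  obtain ⟨m, rfl⟩ := Nat.exists_eq_add_of_le' hk
  simp only [psi, Nat.add_sub_cancel]
  linear_combination -geom_sum_mul x m

theorem pow_mul_eq_neg_one_of_psi_eq_zero {k : ℕ} (hk : 1 ≤ k) {x : R} (hx : psi k x = 0) :
    x ^ (k - 1) * (x ^ 2 - 3 * x + 1) = -1 := by
  linear_combination (x - 1) * hx - psi_mul_sub_one hk x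

theorem psi_one {k : ℕ} (hk : 1 ≤ k) : psi k (1 : R) = -k := by
  obtain ⟨m, rfl⟩ := Nat.exists_eq_add_of_le' hk
  simp only [psi, Nat.add_sub_cancel, one_pow, sum_const, card_range, nsmul_eq_mul, mul_one]
  push_cast
  ring

theorem sub_mul_eq_zero_of_pow_mul_eq_neg_one {n : ℕ} {a b : R}
    (ha : a ^ n * (a ^ 2 - 3 * a + 1) = -1) (hb : b ^ n * (b ^ 2 - 3 * b + 1) = -1) :
    (a - b) * ((a + b - 3) * (a * b) ^ n - ∑ i ∈ range n, a ^ i * b ^ (n - 1 - i)) = 0 := by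
  linear_combination b ^ n * ha - a ^ n * hb - geom_sum₂_mul a b n

end Algebra

theorem two_lt_of_psi_eq_zero {k : ℕ} (hk : 2 ≤ k) {α : ℝ} (hα : 0 < α) (h : psi k α = 0) :
    2 < α := by
  obtain ⟨m, rfl⟩ := Nat.exists_eq_add_of_le' (by omega : 1 ≤ k)
  have hsum : 0 < ∑ i ∈ range m, α ^ i :=
    sum_pos (fun i _ => pow_pos hα i) (nonempty_range_iff.2 (by omega))
  have hfactor : α ^ m * (α - 2) = ∑ i ∈ range m, α ^ i := by
    simp only [psi, Nat.add_sub_cancel] at h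
    linear_combination h
  rw [← hfactor] at hsum
  linarith [(pos_iff_pos_of_mul_pos hsum).1 (pow_pos hα m)]

theorem lt_three_of_pow_mul_eq_neg_one {n : ℕ} {α : ℝ}
    (h : α ^ n * (α ^ 2 - 3 * α + 1) = -1) : α < 3 := by
  by_contra! h3
  have hq : 1 ≤ α ^ 2 - 3 * α + 1 := by nlinarith
  have hpos := pow_pos (by linarith : (0 : ℝ) < α) n
  linarith [mul_le_mul_of_nonneg_left hq hpos.le]

theorem normSq_sq_sub_three_mul_add_one (z : ℂ) :
    normSq (z ^ 2 - 3 * z + 1) =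
      normSq z ^ 2 + (7 - 6 * z.re) * normSq z + 4 * z.re ^ 2 - 6 * z.re + 1 := by
  simp only [normSq_apply, pow_two, sub_re, add_re, mul_re, sub_im, add_im, mul_im, one_re, one_im,
    re_ofNat, im_ofNat]
  ring

theorem eq_one_of_one_le_norm_lt_two {n : ℕ} {β : ℂ} (h : β ^ n * (β ^ 2 - 3 * β + 1) = -1)
    (h1 : 1 ≤ ‖β‖) (h2 : ‖β‖ < 2) : β = 1 := by
  set r := ‖β‖
  set x := β.re
  have hmul : r ^ n * ‖β ^ 2 - 3 * β + 1‖ = 1 := by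
    rw [← norm_pow, ← norm_mul, h, norm_neg, norm_one]
  have ht : ‖β ^ 2 - 3 * β + 1‖ ≤ 1 := by
    nlinarith [one_le_pow₀ (n := n) h1, norm_nonneg (β ^ 2 - 3 * β + 1)]
  have hsq : ‖β ^ 2 - 3 * β + 1‖ ^ 2 =
      (r ^ 2 - 3 * r + 1) ^ 2 + (r - x) * (6 * r ^ 2 - 4 * r - 4 * x + 6) := by
    rw [Complex.sq_norm, normSq_sq_sub_three_mul_add_one, ← Complex.sq_norm]
    ring
  have hxr : x ≤ r := re_le_norm β
  have hannulus : (r ^ 2 - 3 * r + 1) ^ 2 - 1 = (r - 1) * (r * (3 - r) * (2 - r)) := by ring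
  have hpos : 0 < r * (3 - r) * (2 - r) := by
    apply mul_pos (mul_pos _ _) _ <;> linarith
  have hweight : 0 < 6 * r ^ 2 - 4 * r - 4 * x + 6 := by nlinarith
  have hsq_le : ‖β ^ 2 - 3 * β + 1‖ ^ 2 ≤ 1 := pow_le_one₀ (norm_nonneg _) ht
  have hx : x = r := le_antisymm hxr (by nlinarith)
  have hr : r = 1 := le_antisymm (by rw [hx] at hsq; nlinarith) h1
  have him : β.im = 0 := abs_re_eq_norm.1 (by rw [show β.re = ‖β‖ from hx, abs_norm])
  exact Complex.ext (by simpa using hx.trans hr) (by simpa using him)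

theorem norm_geom_sum₂_le {𝕜 : Type*} [NormedDivisionRing 𝕜] (a b : 𝕜) (n : ℕ) :
    ‖∑ i ∈ range n, a ^ i * b ^ (n - 1 - i)‖ ≤ n * max ‖a‖ ‖b‖ ^ (n - 1) := by
  calc ‖∑ i ∈ range n, a ^ i * b ^ (n - 1 - i)‖
      ≤ ∑ i ∈ range n, ‖a ^ i * b ^ (n - 1 - i)‖ := norm_sum_le _ _
    _ ≤ ∑ i ∈ range n, max ‖a‖ ‖b‖ ^ (n - 1) := by
      refine sum_le_sum fun i hi => ?_
      have hin : i + (n - 1 - i) = n - 1 := by have := mem_range.1 hi; omega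
      calc ‖a ^ i * b ^ (n - 1 - i)‖ = ‖a‖ ^ i * ‖b‖ ^ (n - 1 - i) := by
            rw [norm_mul, norm_pow, norm_pow]
        _ ≤ max ‖a‖ ‖b‖ ^ i * max ‖a‖ ‖b‖ ^ (n - 1 - i) := by gcongr <;> simp
        _ = max ‖a‖ ‖b‖ ^ (n - 1) := by rw [← pow_add, hin]
    _ = n * max ‖a‖ ‖b‖ ^ (n - 1) := by rw [sum_const, card_range, nsmul_eq_mul]

theorem norm_geom_sum₂_lt_of_two_le_norm {𝕜 : Type*} [NormedDivisionRing 𝕜] {a b : 𝕜}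
    (ha : 2 ≤ ‖a‖) (hb : 2 ≤ ‖b‖) (n : ℕ) :
    ‖∑ i ∈ range n, a ^ i * b ^ (n - 1 - i)‖ < ‖a * b‖ ^ n := by
  have hM : 1 ≤ max ‖a‖ ‖b‖ := le_trans (by norm_num) (le_trans ha (le_max_left _ _))
  have h2M : 2 * max ‖a‖ ‖b‖ ≤ ‖a * b‖ := by
    rw [norm_mul]
    rcases max_cases ‖a‖ ‖b‖ with ⟨hm, _⟩ | ⟨hm, _⟩ <;> rw [hm] <;> nlinarith
  calc ‖∑ i ∈ range n, a ^ i * b ^ (n - 1 - i)‖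
      ≤ n * max ‖a‖ ‖b‖ ^ (n - 1) := norm_geom_sum₂_le a b n
    _ < 2 ^ n * max ‖a‖ ‖b‖ ^ (n - 1) := by
      gcongr
      exact_mod_cast Nat.lt_two_pow_self
    _ ≤ 2 ^ n * max ‖a‖ ‖b‖ ^ n := by gcongr; omega
    _ = (2 * max ‖a‖ ‖b‖) ^ n := (mul_pow _ _ n).symm
    _ ≤ ‖a * b‖ ^ n := by gcongr

theorem eq_of_two_le_norm {n : ℕ} {α : ℝ} {β : ℂ} (hα2 : 2 < α) (hα3 : α < 3)
    (hα : α ^ n * (α ^ 2 - 3 * α + 1) = -1) (hβ : β ^ n * (β ^ 2 - 3 * β + 1) = -1)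
    (h2 : 2 ≤ ‖β‖) : β = α := by
  by_contra hne
  have hαC : (α : ℂ) ^ n * ((α : ℂ) ^ 2 - 3 * α + 1) = -1 := by exact_mod_cast hα
  have hα2' : 2 ≤ ‖(α : ℂ)‖ := by rw [norm_real, Real.norm_of_nonneg (by linarith)]; linarith
  have hkey := (mul_eq_zero.1 (sub_mul_eq_zero_of_pow_mul_eq_neg_one hβ hαC)).resolve_left
    (sub_ne_zero.2 hne)
  rw [sub_eq_zero] at hkey
  have hlt : ‖β + α - 3‖ * ‖β * α‖ ^ n < ‖β * α‖ ^ n := by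
    rw [← norm_pow, ← norm_mul, hkey, norm_pow]
    exact norm_geom_sum₂_lt_of_two_le_norm h2 hα2' n
  have hge : 1 ≤ ‖β + α - 3‖ := by
    have h3α : ‖((3 - α : ℝ) : ℂ)‖ = 3 - α := by
      rw [norm_real, Real.norm_of_nonneg (by linarith)]
    have := norm_sub_norm_le β ((3 - α : ℝ) : ℂ)
    rw [h3α] at this
    push_cast at this
    rw [show β - (3 - α) = β + α - 3 by ring] at this
    linarith
  have hpos : 0 < ‖β * α‖ ^ n := pow_pos (by rw [norm_mul]; nlinarith) n
  exact absurd ((mul_lt_iff_lt_one_left hpos).1 hlt) (not_lt.2 hge)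

theorem norm_sub_one_mul_one_add_norm_add_one_lt {β : ℂ} (hβ : ‖β‖ ≤ 1)
    (h : 1 ≤ ‖β‖ * ‖β ^ 2 - 3 * β + 1‖) :
    ‖β - 1‖ * (1 + ‖β + 1‖) < 2 * ‖β ^ 2 - 3 * β + 1‖ := by
  have hA : ‖β - 1‖ ^ 2 = normSq β - 2 * β.re + 1 := by
    simp only [Complex.sq_norm, normSq_apply, sub_re, sub_im, one_re, one_im]; ring
  have hC : ‖β + 1‖ ^ 2 = normSq β + 2 * β.re + 1 := by
    simp only [Complex.sq_norm, normSq_apply, add_re, add_im, one_re, one_im]; ring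
  have hQ : ‖β ^ 2 - 3 * β + 1‖ ^ 2 =
      normSq β ^ 2 + (7 - 6 * β.re) * normSq β + 4 * β.re ^ 2 - 6 * β.re + 1 := by
    rw [Complex.sq_norm, normSq_sq_sub_three_mul_add_one]
  have hx : β.re ^ 2 ≤ normSq β := by rw [sq]; exact re_sq_le_normSq β
  have hs : normSq β ≤ 1 := by
    rw [← Complex.sq_norm]; exact pow_le_one₀ (norm_nonneg β) hβ
  have hsQ : 1 ≤ normSq β * ‖β ^ 2 - 3 * β + 1‖ ^ 2 := by
    rw [← Complex.sq_norm, ← mul_pow]; exact one_le_pow₀ h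
  rw [hQ] at hsQ
  have hsquares : ‖β - 1‖ ^ 2 * (1 + ‖β + 1‖ ^ 2) < 2 * ‖β ^ 2 - 3 * β + 1‖ ^ 2 := by
    rw [hA, hC, hQ]
    generalize normSq β = s at hx hs hsQ ⊢
    generalize β.re = x at hx hs hsQ ⊢
    nlinarith [sq_nonneg (s - x), sq_nonneg (1 - x), sq_nonneg (s - 1), sq_nonneg x,
      sq_nonneg (s + x), mul_nonneg (sub_nonneg.2 hx) (sq_nonneg (1 - x))]
  refine lt_of_pow_lt_pow_left₀ 2 (by positivity) ?_
  nlinarith [mul_nonneg (sq_nonneg ‖β - 1‖) (sq_nonneg (1 - ‖β + 1‖))]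

theorem norm_sub_one_lt_norm_of_norm_lt_one {n : ℕ} (hn : n ≠ 0) {β : ℂ}
    (h : β ^ n * (β ^ 2 - 3 * β + 1) = -1) (hβ : ‖β‖ < 1) {c : ℝ} (hc : 2 ≤ c) :
    ‖β - 1‖ < ‖c * (β ^ 2 - 3 * β + 1) + (β ^ 2 - 1)‖ := by
  have hmul : ‖β‖ ^ n * ‖β ^ 2 - 3 * β + 1‖ = 1 := by
    rw [← norm_pow, ← norm_mul, h, norm_neg, norm_one]
  have hrt : 1 ≤ ‖β‖ * ‖β ^ 2 - 3 * β + 1‖ := hmul ▸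
    mul_le_mul_of_nonneg_right (pow_le_of_le_one (norm_nonneg _) hβ.le hn) (norm_nonneg _)
  have hcore := norm_sub_one_mul_one_add_norm_add_one_lt hβ.le hrt
  calc ‖β - 1‖ < 2 * ‖β ^ 2 - 3 * β + 1‖ - ‖β - 1‖ * ‖β + 1‖ := by linarith
    _ ≤ c * ‖β ^ 2 - 3 * β + 1‖ - ‖β ^ 2 - 1‖ := by
      rw [show β ^ 2 - 1 = (β - 1) * (β + 1) by ring, norm_mul]
      gcongr
    _ = ‖c * (β ^ 2 - 3 * β + 1)‖ - ‖β ^ 2 - 1‖ := by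
      rw [norm_mul, norm_real, Real.norm_of_nonneg (by linarith)]
    _ ≤ ‖c * (β ^ 2 - 3 * β + 1) + (β ^ 2 - 1)‖ := norm_sub_le_norm_add _ _

theorem norm_lt_one_of_psi_eq_zero {k : ℕ} (hk : 2 ≤ k) {α : ℝ} (hα : 1 < α)
    (hαroot : psi k α = 0) {β : ℂ} (hβ : psi k β = 0) (hne : β ≠ α) : ‖β‖ < 1 := by
  have hαq := pow_mul_eq_neg_one_of_psi_eq_zero (by omega) hαroot
  have hβq := pow_mul_eq_neg_one_of_psi_eq_zero (by omega) hβ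
  by_contra! h1
  rcases lt_or_ge ‖β‖ 2 with h2 | h2
  · rw [eq_one_of_one_le_norm_lt_two hβq h1 h2, psi_one (by omega), neg_eq_zero] at hβ
    exact absurd hβ (Nat.cast_ne_zero.2 (by omega))
  · exact hne (eq_of_two_le_norm (two_lt_of_psi_eq_zero hk (by linarith) hαroot)
      (lt_three_of_pow_mul_eq_neg_one hαq) hαq hβq h2)

end KPell

/-- For `k ≥ 2` and every root `β` of `Ψ_k` other than the dominant
root `α`, one has `|g_k(β)| < 1`. -/
theorem kPell_g_small_at_nondominant_roots (k : ℕ) (hk : 2 ≤ k)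
    (α : ℝ) (hα : 1 < α)
    (hroot : α ^ k - 2 * α ^ (k - 1) - ∑ i ∈ Finset.range (k - 1), α ^ i = 0)
    (β : ℂ) (hβ : β ^ k - 2 * β ^ (k - 1) - ∑ i ∈ Finset.range (k - 1), β ^ i = 0)
    (hne : β ≠ (α : ℂ)) :
    ‖(β - 1) / ((k + 1) * β ^ 2 - 3 * k * β + k - 1)‖ < 1 := by
  have hβq : β ^ (k - 1) * (β ^ 2 - 3 * β + 1) = -1 :=
    KPell.pow_mul_eq_neg_one_of_psi_eq_zero (by omega) hβ
  have hden : ((k : ℂ) + 1) * β ^ 2 - 3 * k * β + k - 1 =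
      ((k : ℝ) : ℂ) * (β ^ 2 - 3 * β + 1) + (β ^ 2 - 1) := by
    push_cast; ring
  have hlt := KPell.norm_sub_one_lt_norm_of_norm_lt_one (by omega) hβq
    (KPell.norm_lt_one_of_psi_eq_zero hk hα hroot hβ hne) (c := k) (by exact_mod_cast hk)
  rw [norm_div, hden, div_lt_one ((norm_nonneg _).trans_lt hlt)]
  exact hlt
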